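/- For every odd prime p, every subgroup of the Heisenberg group H_p is one of the following: the trivial subgroup, the subgroup ζ(H_p), one of the p²+p subgroups A_{i,j} with i ∈ (ZMod p) ∪ {∞} and j ∈ ZMod p, one of the p+1 subgroups N_i with i ∈ (ZMod p) ∪ {∞}, or H_p itself. -/

import Mathlib

@[ext]
structure Heis (p : ℕ) where
  x : ZMod p
  y : ZMod p
  z : ZMod p

namespace Heis

variable {p : ℕ}

instance : Mul (Heis p) := ⟨fun a b => ⟨a.x + b.x, a.y + b.y, a.z + b.z + a.x * b.y⟩⟩
instance : One (Heis p) := ⟨⟨0, 0, 0⟩⟩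
instance : Inv (Heis p) := ⟨fun a => ⟨-a.x, -a.y, a.x * a.y - a.z⟩⟩

lemma mul_def (a b : Heis p) :
    a * b = ⟨a.x + b.x, a.y + b.y, a.z + b.z + a.x * b.y⟩ := rfl
lemma one_def : (1 : Heis p) = ⟨0, 0, 0⟩ := rfl
lemma inv_def (a : Heis p) : a⁻¹ = ⟨-a.x, -a.y, a.x * a.y - a.z⟩ := rfl

instance instGroup : Group (Heis p) where
  mul_assoc a b c := by ext <;> simp [mul_def] <;> ring
  one_mul a := by ext <;> simp [mul_def, one_def]
  mul_one a := by ext <;> simp [mul_def, one_def]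
  inv_mul_cancel a := by ext <;> simp [mul_def, inv_def, one_def]

end Heis

/-- The centre subgroup ζ(H_p) = {(0,0,z)}. -/
def Zeta (p : ℕ) : Subgroup (Heis p) where
  carrier := {g | g.x = 0 ∧ g.y = 0}
  one_mem' := ⟨rfl, rfl⟩
  mul_mem' := by
    rintro a b ⟨ha1, ha2⟩ ⟨hb1, hb2⟩
    exact ⟨by simp [Heis.mul_def, ha1, hb1], by simp [Heis.mul_def, ha2, hb2]⟩
  inv_mem' := by
    rintro a ⟨h1, h2⟩
    exact ⟨by simp [Heis.inv_def, h1], by simp [Heis.inv_def, h2]⟩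

/-- The subgroups N_i of order p²; `some i` is N_i for i ∈ ZMod p, `none` is N_∞. -/
def N (p : ℕ) : Option (ZMod p) → Subgroup (Heis p)
  | some i =>
    { carrier := {g | g.y = g.x * i}
      one_mem' := by simp [Heis.one_def]
      mul_mem' := by
        intro a b ha hb
        simp only [Set.mem_setOf_eq, Heis.mul_def] at *
        rw [ha, hb]; ring
      inv_mem' := by
        intro a ha
        simp only [Set.mem_setOf_eq, Heis.inv_def] at *
        rw [ha]; ring }
  | none =>
    { carrier := {g | g.x = 0}
      one_mem' := by simp [Heis.one_def]
      mul_mem' := by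
        intro a b ha hb
        simp only [Set.mem_setOf_eq, Heis.mul_def] at *
        rw [ha, hb]; ring
      inv_mem' := by
        intro a ha
        simp only [Set.mem_setOf_eq, Heis.inv_def] at *
        rw [ha]; ring }

/-- The cyclic subgroups A_{i,j} of order p; `A p (some i) j = ⟨(1,i,j)⟩`,
`A p none j = ⟨(0,1,j)⟩`. -/
def A (p : ℕ) : Option (ZMod p) → ZMod p → Subgroup (Heis p)
  | some i, j => Subgroup.zpowers (⟨1, i, j⟩ : Heis p)
  | none, j => Subgroup.zpowers (⟨0, 1, j⟩ : Heis p)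

/-!
Projecting `g ↦ (g.x, g.y)` is a homomorphism onto `𝔽_p²` with kernel `ζ(H_p)`, and the
commutator of `a` and `b` is the central element `(0, 0, a.x * b.y - b.x * a.y)`. As `ζ(H_p)` has
prime order, a subgroup `K` either contains it, and is then the preimage of its image, or meets
it trivially, and then projects injectively onto a subspace on which this determinant vanishes,
so of dimension at most one. The subspaces of `𝔽_p²` are `0`, the `p + 1` lines and the plane;
their preimages are `ζ(H_p)`, the `N_i` and `H_p`, and the lifts of the lines are the `A_{i,j}`.
-/

def slopeVec {F : Type*} [Zero F] [One F] : Option F → F × F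
  | some i => (1, i)
  | none => (0, 1)

section Lines

variable {F : Type*} [Field F]

theorem exists_span_singleton_eq_span_slopeVec {v : F × F} (hv : v ≠ 0) :
    ∃ i, F ∙ v = F ∙ slopeVec i := by
  rcases ne_or_eq v.1 0 with h1 | h1
  · refine ⟨some (v.2 / v.1), ?_⟩
    calc F ∙ v = F ∙ (v.1 • slopeVec (some (v.2 / v.1))) := by
          congr; ext <;> simp [slopeVec, h1, mul_div_cancel₀]
      _ = _ := Submodule.span_singleton_smul_eq h1.isUnit _
  · have h2 : v.2 ≠ 0 := fun h2 => hv (Prod.ext h1 h2)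
    refine ⟨none, ?_⟩
    calc F ∙ v = F ∙ (v.2 • slopeVec none) := by
          congr; ext <;> simp [slopeVec, h1]
      _ = _ := Submodule.span_singleton_smul_eq h2.isUnit _

theorem Submodule.eq_bot_or_eq_span_slopeVec_or_eq_top (L : Submodule F (F × F)) :
    L = ⊥ ∨ (∃ i, L = F ∙ slopeVec i) ∨ L = ⊤ := by
  rcases eq_or_ne L ⊥ with hL | hL
  · exact Or.inl hL
  obtain ⟨v, hvL, hv⟩ := Submodule.exists_mem_ne_zero_of_ne_bot hL
  have hdim : Module.finrank F L ≤ 2 := L.finrank_le.trans (by simp)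
  interval_cases h : Module.finrank F L
  · exact absurd (Submodule.finrank_eq_zero.mp h) hL
  · obtain ⟨i, hi⟩ := exists_span_singleton_eq_span_slopeVec hv
    exact Or.inr (Or.inl ⟨i, (eq_span_singleton_of_mem_of_finrank_eq_one h hvL hv).trans hi⟩)
  · exact Or.inr (Or.inr (Submodule.eq_top_of_finrank_eq (h.trans (by simp))))

end Lines

open scoped commutatorElement

namespace Heis

variable {p : ℕ}

def xy (g : Heis p) : ZMod p × ZMod p := (g.x, g.y)

@[simp] lemma xy_mul (a b : Heis p) : (a * b).xy = a.xy + b.xy := rfl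
@[simp] lemma xy_inv (a : Heis p) : a⁻¹.xy = -a.xy := rfl

lemma mem_zeta_iff {g : Heis p} : g ∈ Zeta p ↔ g.xy = 0 := Prod.mk_eq_zero.symm

lemma mul_inv_mem_zeta_iff {g h : Heis p} : g * h⁻¹ ∈ Zeta p ↔ g.xy = h.xy := by
  rw [mem_zeta_iff, xy_mul, xy_inv, ← sub_eq_add_neg, sub_eq_zero]

lemma mk_zero_zero_pow (z : ZMod p) (n : ℕ) :
    (⟨0, 0, z⟩ : Heis p) ^ n = ⟨0, 0, n * z⟩ := by
  induction n with
  | zero => ext <;> simp [one_def]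
  | succ n ih => ext <;> simp [pow_succ, ih, mul_def, add_one_mul]

lemma commutatorElement_eq (a b : Heis p) : ⁅a, b⁆ = ⟨0, 0, a.x * b.y - b.x * a.y⟩ := by
  ext <;> simp [commutatorElement_def, mul_def, inv_def]
  ring

theorem zeta_le_or_inf_zeta_eq_bot [Fact p.Prime] (K : Subgroup (Heis p)) :
    Zeta p ≤ K ∨ K ⊓ Zeta p = ⊥ := by
  rcases (K ⊓ Zeta p).bot_or_exists_ne_one with hK | ⟨c, ⟨hcK, hcx, hcy⟩, hc⟩
  · exact Or.inr hK
  refine Or.inl fun g ⟨hgx, hgy⟩ => ?_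
  have hc' : c = ⟨0, 0, c.z⟩ := Heis.ext hcx hcy rfl
  have hcz : c.z ≠ 0 := fun h => hc (by rw [hc', h]; rfl)
  have hg : g = c ^ (g.z / c.z).val := by
    rw [hc', mk_zero_zero_pow]; ext <;> simp [hgx, hgy, hcz]
  exact hg ▸ K.pow_mem hcK _

def xyImage (K : Subgroup (Heis p)) : Submodule (ZMod p) (ZMod p × ZMod p) :=
  AddSubgroup.toZModSubmodule p
    { carrier := xy '' K
      add_mem' := by
        rintro _ _ ⟨a, ha, rfl⟩ ⟨b, hb, rfl⟩
        exact ⟨a * b, K.mul_mem ha hb, rfl⟩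
      zero_mem' := ⟨1, K.one_mem, rfl⟩
      neg_mem' := by rintro _ ⟨a, ha, rfl⟩; exact ⟨a⁻¹, K.inv_mem ha, rfl⟩ }

def xyPreimage (L : Submodule (ZMod p) (ZMod p × ZMod p)) : Subgroup (Heis p) where
  carrier := xy ⁻¹' L
  mul_mem' ha hb := L.add_mem ha hb
  one_mem' := L.zero_mem
  inv_mem' ha := L.neg_mem ha

lemma mem_xyImage {K : Subgroup (Heis p)} {v : ZMod p × ZMod p} :
    v ∈ xyImage K ↔ ∃ g ∈ K, g.xy = v := Iff.rfl

lemma mem_xyPreimage {L : Submodule (ZMod p) (ZMod p × ZMod p)} {g : Heis p} :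
    g ∈ xyPreimage L ↔ g.xy ∈ L := Iff.rfl

lemma le_xyPreimage_xyImage (K : Subgroup (Heis p)) : K ≤ xyPreimage (xyImage K) :=
  fun g hg => ⟨g, hg, rfl⟩

lemma xyPreimage_xyImage_of_zeta_le {K : Subgroup (Heis p)} (hK : Zeta p ≤ K) :
    xyPreimage (xyImage K) = K := by
  refine le_antisymm (fun g ⟨h, hh, hhg⟩ => ?_) (le_xyPreimage_xyImage K)
  simpa using K.mul_mem (hK (mul_inv_mem_zeta_iff.mpr hhg.symm)) hh

lemma xyPreimage_bot : xyPreimage (⊥ : Submodule (ZMod p) (ZMod p × ZMod p)) = Zeta p := by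
  ext g; rw [mem_xyPreimage, Submodule.mem_bot, mem_zeta_iff]

lemma xyPreimage_top : xyPreimage (⊤ : Submodule (ZMod p) (ZMod p × ZMod p)) = ⊤ := by
  ext g; simp [mem_xyPreimage]

lemma xyPreimage_span_slopeVec (i : Option (ZMod p)) :
    xyPreimage (ZMod p ∙ slopeVec i) = N p i := by
  ext g
  rw [mem_xyPreimage, Submodule.mem_span_singleton]
  cases i <;> simp [slopeVec, xy, N, Prod.ext_iff, eq_comm]

lemma A_eq_zpowers (i : Option (ZMod p)) (j : ZMod p) :
    A p i j = Subgroup.zpowers ⟨(slopeVec i).1, (slopeVec i).2, j⟩ := by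
  cases i <;> rfl

lemma eq_of_le_of_xyImage_le {H K : Subgroup (Heis p)} (hK : K ⊓ Zeta p = ⊥) (hHK : H ≤ K)
    (himage : xyImage K ≤ xyImage H) : H = K := by
  refine le_antisymm hHK fun g hg => ?_
  obtain ⟨h, hh, hhg⟩ := himage ⟨g, hg, rfl⟩
  have hgh : g * h⁻¹ ∈ K ⊓ Zeta p :=
    ⟨K.mul_mem hg (K.inv_mem (hHK hh)), mul_inv_mem_zeta_iff.mpr hhg.symm⟩
  rw [hK, Subgroup.mem_bot, mul_inv_eq_one] at hgh
  exact hgh ▸ hh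

lemma xyImage_ne_top [Nontrivial (ZMod p)] {K : Subgroup (Heis p)} (hK : K ⊓ Zeta p = ⊥) :
    xyImage K ≠ ⊤ := by
  intro hL
  obtain ⟨a, ha, hax⟩ : ∃ a ∈ K, a.xy = (1, 0) := mem_xyImage.mp (hL ▸ Submodule.mem_top)
  obtain ⟨b, hb, hbx⟩ : ∃ b ∈ K, b.xy = (0, 1) := mem_xyImage.mp (hL ▸ Submodule.mem_top)
  simp only [xy, Prod.mk.injEq] at hax hbx
  have hab : ⁅a, b⁆ ∈ K ⊓ Zeta p := by
    refine ⟨?_, ?_⟩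
    · rw [commutatorElement_def]
      exact K.mul_mem (K.mul_mem (K.mul_mem ha hb) (K.inv_mem ha)) (K.inv_mem hb)
    · rw [commutatorElement_eq]; exact ⟨rfl, rfl⟩
  rw [hK, Subgroup.mem_bot, commutatorElement_eq] at hab
  simpa [hax, hbx, one_def] using congrArg Heis.z hab

lemma exists_eq_A_of_xyImage_eq {K : Subgroup (Heis p)} {i : Option (ZMod p)}
    (hK : K ⊓ Zeta p = ⊥) (hL : xyImage K = ZMod p ∙ slopeVec i) : ∃ j, K = A p i j := by
  obtain ⟨u, hu, hux⟩ := mem_xyImage.mp (hL ▸ Submodule.mem_span_singleton_self _)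
  have hA : A p i u.z = Subgroup.zpowers u := by rw [A_eq_zpowers, ← hux]; rfl
  refine ⟨u.z, (eq_of_le_of_xyImage_le hK ?_ ?_).symm⟩
  · rw [hA, Subgroup.zpowers_le]; exact hu
  · rw [hL, Submodule.span_singleton_le_iff_mem, hA]; exact ⟨u, Subgroup.mem_zpowers u, hux⟩

theorem eq_zeta_or_eq_N_or_eq_top [Fact p.Prime] {K : Subgroup (Heis p)} (hK : Zeta p ≤ K) :
    K = Zeta p ∨ (∃ i, K = N p i) ∨ K = ⊤ := by
  rw [← xyPreimage_xyImage_of_zeta_le hK]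
  rcases (xyImage K).eq_bot_or_eq_span_slopeVec_or_eq_top with hL | ⟨i, hL⟩ | hL <;> rw [hL]
  · exact Or.inl xyPreimage_bot
  · exact Or.inr (Or.inl ⟨i, xyPreimage_span_slopeVec i⟩)
  · exact Or.inr (Or.inr xyPreimage_top)

theorem eq_bot_or_eq_A [Fact p.Prime] {K : Subgroup (Heis p)} (hK : K ⊓ Zeta p = ⊥) :
    K = ⊥ ∨ ∃ i j, K = A p i j := by
  rcases (xyImage K).eq_bot_or_eq_span_slopeVec_or_eq_top with hL | ⟨i, hL⟩ | hL
  · have hKZ : K ≤ Zeta p := xyPreimage_bot (p := p) ▸ hL ▸ le_xyPreimage_xyImage K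
    exact Or.inl (inf_eq_left.mpr hKZ ▸ hK)
  · exact Or.inr ⟨i, exists_eq_A_of_xyImage_eq hK hL⟩
  · exact absurd hL (xyImage_ne_top hK)

end Heis

theorem heisenberg_subgroup_classification (p : ℕ) (hp : p.Prime)
    (K : Subgroup (Heis p)) :
    K = ⊥ ∨ K = Zeta p ∨ (∃ (i : Option (ZMod p)) (j : ZMod p), K = A p i j) ∨
      (∃ i : Option (ZMod p), K = N p i) ∨ K = ⊤ := by
  have := Fact.mk hp
  rcases Heis.zeta_le_or_inf_zeta_eq_bot K with hK | hK
  · rcases Heis.eq_zeta_or_eq_N_or_eq_top hK with h | h | h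
    exacts [Or.inr (Or.inl h), Or.inr (Or.inr (Or.inr (Or.inl h))),
      Or.inr (Or.inr (Or.inr (Or.inr h)))]
  · rcases Heis.eq_bot_or_eq_A hK with h | h
    exacts [Or.inl h, Or.inr (Or.inr (Or.inl h))]
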